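/- Fix n ≥ 3 and let H₀ = H(0,…,0,0,0) be the split superalgebra from the class H with all parameters zero. The space of even derivations of H₀ contains two nil-independent derivations d₁, d₂ given by: d₁(e₁)=2e₁, d₁(e_i)=2(i-1)e_i (3≤i≤n), d₁(e₂)=0, d₁(y_i)=(2i-1)y_i (1≤i≤n); and d₂(e₂)=e₂ with d₂ vanishing on all other basis vectors. Both d₁ and d₂ are even derivations of H₀, and for all (c₁,c₂) ≠ (0,0) and all k ≥ 1, (c₁d₁ + c₂d₂)^k ≠ 0. -/

import Mathlib

/-!
Both maps are diagonal in the basis `e₁, …, e_n, y₁, …, y_n`, and a diagonal map is a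
derivation exactly when its eigenvalues form a grading of the multiplication table: each
nonzero product `[x, x'] = c x''` has weight of `x''` equal to the sum of the weights of `x`
and `x'`. Both weight assignments pass this test. For nil-independence, `e₂` is an
eigenvector of `c₁d₁ + c₂d₂` with eigenvalue `c₂` and `y₁` one with eigenvalue `c₁`; a
nilpotent map has only the eigenvalue `0`.
-/

section

open Module Module.End Submodule

section Eigen

variable {R M : Type*} [CommRing R] [AddCommGroup M] [Module R M]

theorem leibniz_of_mem_eigenspace {br : M →ₗ[R] M →ₗ[R] M} {d : End R M} {x y : M} {α β : R}
    (hx : x ∈ d.eigenspace α) (hy : y ∈ d.eigenspace β)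
    (hxy : br x y ∈ d.eigenspace (α + β)) :
    d (br x y) = br (d x) y + br x (d y) := by
  rw [mem_eigenspace_iff] at hx hy hxy
  rw [hx, hy, hxy, map_smul, LinearMap.smul_apply, map_smul, add_smul]

theorem leibniz_of_basis {ι : Type*} (b : Basis ι R M) (br : M →ₗ[R] M →ₗ[R] M) (d : End R M)
    (h : ∀ i j, d (br (b i) (b j)) = br (d (b i)) (b j) + br (b i) (d (b j))) (u v : M) :
    d (br u v) = br (d u) v + br u (d v) := by
  have key : br.compr₂ d = br ∘ₗ d + br.compl₂ d := LinearMap.ext_basis b b (by simpa using h)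
  simpa using LinearMap.congr_fun₂ key u v

theorem mem_span_range_of_mem_eigenspace {ι : Type*} {d : End R M} (v : ι → M) (w : ι → R)
    (hv : ∀ i, v i ∈ d.eigenspace (w i)) {x : M} (hx : x ∈ span R (Set.range v)) :
    d x ∈ span R (Set.range v) := by
  have : span R (Set.range v) ≤ (span R (Set.range v)).comap d := by
    refine span_le.mpr ?_
    rintro _ ⟨i, rfl⟩
    rw [SetLike.mem_coe, mem_comap, mem_eigenspace_iff.mp (hv i)]
    exact smul_mem _ _ (subset_span ⟨i, rfl⟩)
  exact this hx

theorem mem_eigenspace_smul_add_smul {d₁ d₂ : End R M} {x : M} {α β : R}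
    (h₁ : x ∈ d₁.eigenspace α) (h₂ : x ∈ d₂.eigenspace β) (c₁ c₂ : R) :
    x ∈ (c₁ • d₁ + c₂ • d₂).eigenspace (c₁ * α + c₂ * β) := by
  rw [mem_eigenspace_iff] at *
  simp only [LinearMap.add_apply, LinearMap.smul_apply, h₁, h₂, smul_smul, add_smul]

theorem mem_eigenspace_of_eq_zero_outside {n : ℕ} {f : ℕ → M}
    (hf : ∀ k, ¬(1 ≤ k ∧ k ≤ n) → f k = 0) {d : End R M} {w : ℕ → R}
    (h : ∀ k, 1 ≤ k → k ≤ n → d (f k) = w k • f k) (k : ℕ) : f k ∈ d.eigenspace (w k) := by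
  rw [mem_eigenspace_iff]
  by_cases hk : 1 ≤ k ∧ k ≤ n
  · exact h k hk.1 hk.2
  · simp [hf k hk]

end Eigen

theorem not_isNilpotent_of_mem_eigenspace {K V : Type*} [Field K] [AddCommGroup V] [Module K V]
    {f : End K V} {μ : K} {x : V} (hx : x ∈ f.eigenspace μ) (hx₀ : x ≠ 0) (hμ : μ ≠ 0) :
    ¬IsNilpotent f := fun hf =>
  have hμf : f.HasEigenvalue μ := hasEigenvalue_of_hasEigenvector (hasEigenvector_iff.mpr ⟨hx, hx₀⟩)
  hμ (hμf.isNilpotent_of_isNilpotent hf).eq_zero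

theorem not_isNilpotent_smul_add_smul {K V : Type*} [Field K] [AddCommGroup V] [Module K V]
    {d₁ d₂ : End K V} {x y : V} (hx₁ : x ∈ d₁.eigenspace 0) (hx₂ : x ∈ d₂.eigenspace 1)
    (hy₁ : y ∈ d₁.eigenspace 1) (hy₂ : y ∈ d₂.eigenspace 0) (hx : x ≠ 0) (hy : y ≠ 0)
    {c₁ c₂ : K} (hc : ¬(c₁ = 0 ∧ c₂ = 0)) : ¬IsNilpotent (c₁ • d₁ + c₂ • d₂) := by
  by_cases h₁ : c₁ = 0
  · exact not_isNilpotent_of_mem_eigenspace (mem_eigenspace_smul_add_smul hx₁ hx₂ c₁ c₂) hx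
      (by simpa [h₁] using hc)
  · exact not_isNilpotent_of_mem_eigenspace (mem_eigenspace_smul_add_smul hy₁ hy₂ c₁ c₂) hy
      (by simpa using h₁)

structure IsH₀Bracket {V : Type*} [AddCommGroup V] [Module ℂ V] (n : ℕ) (eN yN : ℕ → V)
    (br : V →ₗ[ℂ] V →ₗ[ℂ] V) : Prop where
  ee1 : ∀ i, 1 ≤ i → i ≤ n →
    br (eN i) (eN 1) = if i = 1 then eN 3 else if i = 2 then 0 else eN (i + 1)
  ee0 : ∀ i j, 1 ≤ i → i ≤ n → 2 ≤ j → j ≤ n → br (eN i) (eN j) = 0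
  ye1 : ∀ j, 1 ≤ j → j ≤ n → br (yN j) (eN 1) = yN (j + 1)
  ye0 : ∀ j i, 1 ≤ j → j ≤ n → 2 ≤ i → i ≤ n → br (yN j) (eN i) = 0
  ey1 : ∀ i, 1 ≤ i → i ≤ n → br (eN i) (yN 1) =
    if i = 1 then (1 / 2 : ℂ) • yN 2 else if i = 2 then 0 else (1 / 2 : ℂ) • yN i
  ey0 : ∀ i j, 1 ≤ i → i ≤ n → 2 ≤ j → j ≤ n → br (eN i) (yN j) = 0
  yy1 : ∀ j, 1 ≤ j → j ≤ n → br (yN j) (yN 1) = if j = 1 then eN 1 else eN (j + 1)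
  yy0 : ∀ j k, 1 ≤ j → j ≤ n → 2 ≤ k → k ≤ n → br (yN j) (yN k) = 0

/-- `a k` and `b k` are weights of `eN k` and `yN k` making every product of `H₀` homogeneous.
The conditions are imposed for all indices, so that no boundary case at `n` arises. -/
structure IsH₀Grading (a b : ℕ → ℂ) : Prop where
  ee11 : a 3 = a 1 + a 1
  ee : ∀ i, 3 ≤ i → a (i + 1) = a i + a 1
  ye : ∀ j, 1 ≤ j → b (j + 1) = b j + a 1
  ey : ∀ i, 3 ≤ i → b i = a i + b 1
  yy11 : a 1 = b 1 + b 1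
  yy : ∀ j, 2 ≤ j → a (j + 1) = b j + b 1

namespace IsH₀Bracket

variable {V : Type*} [AddCommGroup V] [Module ℂ V] {n : ℕ} {eN yN : ℕ → V}
  {br : V →ₗ[ℂ] V →ₗ[ℂ] V} {a b : ℕ → ℂ} {d : End ℂ V}

theorem e_e_mem_eigenspace (H : IsH₀Bracket n eN yN br) (G : IsH₀Grading a b)
    (hde : ∀ k, eN k ∈ d.eigenspace (a k)) {i j : ℕ} (hi : 1 ≤ i) (hin : i ≤ n) (hj : 1 ≤ j)
    (hjn : j ≤ n) : br (eN i) (eN j) ∈ d.eigenspace (a i + a j) := by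
  obtain rfl | hj₂ : j = 1 ∨ 2 ≤ j := by omega
  · rw [H.ee1 i hi hin]
    split_ifs with h₁ h₂
    · subst h₁; rw [← G.ee11]; exact hde 3
    · exact zero_mem _
    · rw [← G.ee i (by omega)]; exact hde (i + 1)
  · rw [H.ee0 i j hi hin hj₂ hjn]; exact zero_mem _

theorem y_e_mem_eigenspace (H : IsH₀Bracket n eN yN br) (G : IsH₀Grading a b)
    (hdy : ∀ k, yN k ∈ d.eigenspace (b k)) {j i : ℕ} (hj : 1 ≤ j) (hjn : j ≤ n) (hi : 1 ≤ i)
    (hin : i ≤ n) : br (yN j) (eN i) ∈ d.eigenspace (b j + a i) := by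
  obtain rfl | hi₂ : i = 1 ∨ 2 ≤ i := by omega
  · rw [H.ye1 j hj hjn, ← G.ye j hj]; exact hdy (j + 1)
  · rw [H.ye0 j i hj hjn hi₂ hin]; exact zero_mem _

theorem e_y_mem_eigenspace (H : IsH₀Bracket n eN yN br) (G : IsH₀Grading a b)
    (hdy : ∀ k, yN k ∈ d.eigenspace (b k)) {i j : ℕ} (hi : 1 ≤ i) (hin : i ≤ n) (hj : 1 ≤ j)
    (hjn : j ≤ n) : br (eN i) (yN j) ∈ d.eigenspace (a i + b j) := by
  obtain rfl | hj₂ : j = 1 ∨ 2 ≤ j := by omega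
  · rw [H.ey1 i hi hin]
    split_ifs with h₁ h₂
    · subst h₁; rw [add_comm, ← G.ye 1 le_rfl]; exact smul_mem _ _ (hdy 2)
    · exact zero_mem _
    · rw [← G.ey i (by omega)]; exact smul_mem _ _ (hdy i)
  · rw [H.ey0 i j hi hin hj₂ hjn]; exact zero_mem _

theorem y_y_mem_eigenspace (H : IsH₀Bracket n eN yN br) (G : IsH₀Grading a b)
    (hde : ∀ k, eN k ∈ d.eigenspace (a k)) {j k : ℕ} (hj : 1 ≤ j) (hjn : j ≤ n) (hk : 1 ≤ k)
    (hkn : k ≤ n) : br (yN j) (yN k) ∈ d.eigenspace (b j + b k) := by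
  obtain rfl | hk₂ : k = 1 ∨ 2 ≤ k := by omega
  · rw [H.yy1 j hj hjn]
    split_ifs with h₁
    · subst h₁; rw [← G.yy11]; exact hde 1
    · rw [← G.yy j (by omega)]; exact hde (j + 1)
  · rw [H.yy0 j k hj hjn hk₂ hkn]; exact zero_mem _

theorem leibniz_of_grading (H : IsH₀Bracket n eN yN br) (G : IsH₀Grading a b)
    (bas : Basis (Fin n ⊕ Fin n) ℂ V) (hbe : ∀ i, bas (Sum.inl i) = eN (i + 1))
    (hby : ∀ i, bas (Sum.inr i) = yN (i + 1)) (hde : ∀ k, eN k ∈ d.eigenspace (a k))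
    (hdy : ∀ k, yN k ∈ d.eigenspace (b k)) (u v : V) :
    d (br u v) = br (d u) v + br u (d v) := by
  refine leibniz_of_basis bas br d (fun p q => ?_) u v
  rcases p with i | i <;> rcases q with j | j <;> simp only [hbe, hby]
  · exact leibniz_of_mem_eigenspace (hde _) (hde _)
      (H.e_e_mem_eigenspace G hde (by omega) (by omega) (by omega) (by omega))
  · exact leibniz_of_mem_eigenspace (hde _) (hdy _)
      (H.e_y_mem_eigenspace G hdy (by omega) (by omega) (by omega) (by omega))
  · exact leibniz_of_mem_eigenspace (hdy _) (hde _)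
      (H.y_e_mem_eigenspace G hdy (by omega) (by omega) (by omega) (by omega))
  · exact leibniz_of_mem_eigenspace (hdy _) (hdy _)
      (H.y_y_mem_eigenspace G hde (by omega) (by omega) (by omega) (by omega))

end IsH₀Bracket

def weightE₁ (k : ℕ) : ℂ := if k = 1 then 2 else if k = 2 then 0 else 2 * ((k : ℂ) - 1)

def weightY₁ (k : ℕ) : ℂ := 2 * (k : ℂ) - 1

def weightE₂ (k : ℕ) : ℂ := if k = 2 then 1 else 0

theorem isH₀Grading_weight₁ : IsH₀Grading weightE₁ weightY₁ where
  ee11 := by norm_num [weightE₁]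
  ee i hi := by
    simp only [weightE₁, if_neg (show i ≠ 1 by omega), if_neg (show i ≠ 2 by omega),
      if_neg (show i + 1 ≠ 1 by omega), if_neg (show i + 1 ≠ 2 by omega)]
    push_cast; ring
  ye j _ := by simp only [weightE₁, weightY₁, if_true]; push_cast; ring
  ey i hi := by
    simp only [weightE₁, weightY₁, if_neg (show i ≠ 1 by omega), if_neg (show i ≠ 2 by omega)]
    push_cast; ring
  yy11 := by norm_num [weightE₁, weightY₁]
  yy j hj := by
    simp only [weightE₁, weightY₁, if_neg (show j + 1 ≠ 1 by omega),
      if_neg (show j + 1 ≠ 2 by omega)]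
    push_cast; ring

theorem isH₀Grading_weight₂ : IsH₀Grading weightE₂ 0 where
  ee11 := by norm_num [weightE₂]
  ee i hi := by simp [weightE₂, show i ≠ 2 by omega, show i + 1 ≠ 2 by omega]
  ye _ _ := by simp [weightE₂]
  ey i hi := by simp [weightE₂, show i ≠ 2 by omega]
  yy11 := by norm_num [weightE₂]
  yy j hj := by simp [weightE₂, show j + 1 ≠ 2 by omega]

section Weights

variable {V : Type*} [AddCommGroup V] [Module ℂ V] {n : ℕ} {eN : ℕ → V} {d : End ℂ V}

theorem mem_eigenspace_weightE₁ (heN0 : ∀ k, ¬(1 ≤ k ∧ k ≤ n) → eN k = 0)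
    (h₁ : d (eN 1) = (2 : ℂ) • eN 1) (h₂ : d (eN 2) = 0)
    (h : ∀ i, 3 ≤ i → i ≤ n → d (eN i) = (2 * ((i : ℂ) - 1)) • eN i) (k : ℕ) :
    eN k ∈ d.eigenspace (weightE₁ k) := by
  refine mem_eigenspace_of_eq_zero_outside heN0 (fun k hk hkn => ?_) k
  unfold weightE₁
  split_ifs with hk₁ hk₂
  · subst hk₁; exact h₁
  · subst hk₂; simp [h₂]
  · exact h k (by omega) hkn

theorem mem_eigenspace_weightE₂ (heN0 : ∀ k, ¬(1 ≤ k ∧ k ≤ n) → eN k = 0)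
    (h₂ : d (eN 2) = eN 2)
    (h : ∀ i, 1 ≤ i → i ≤ n → i ≠ 2 → d (eN i) = 0) (k : ℕ) :
    eN k ∈ d.eigenspace (weightE₂ k) := by
  refine mem_eigenspace_of_eq_zero_outside heN0 (fun k hk hkn => ?_) k
  unfold weightE₂
  split_ifs with hk₂
  · subst hk₂; simpa using h₂
  · simp [h k hk hkn hk₂]

end Weights

end

/-- The split superalgebra H₀ = H(0,…,0,0,0) admits the two nil-independent even
derivations d₁, d₂ of the statement: both are even derivations, and no nonzero
linear combination of them is nilpotent. -/
theorem statement17 {V : Type*} [AddCommGroup V] [Module ℂ V]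
    (n : ℕ) (hn : 3 ≤ n)
    (bas : Module.Basis (Fin n ⊕ Fin n) ℂ V)
    (eN yN : ℕ → V)
    (heN : ∀ k (h : 1 ≤ k ∧ k ≤ n), eN k = bas (Sum.inl ⟨k - 1, by omega⟩))
    (heN0 : ∀ k, ¬(1 ≤ k ∧ k ≤ n) → eN k = 0)
    (hyN : ∀ k (h : 1 ≤ k ∧ k ≤ n), yN k = bas (Sum.inr ⟨k - 1, by omega⟩))
    (hyN0 : ∀ k, ¬(1 ≤ k ∧ k ≤ n) → yN k = 0)
    (br : V →ₗ[ℂ] V →ₗ[ℂ] V)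
    -- multiplication table of H₀:
    (hee1 : ∀ i, 1 ≤ i → i ≤ n →
      br (eN i) (eN 1) = if i = 1 then eN 3 else if i = 2 then 0 else eN (i + 1))
    (hee0 : ∀ i j, 1 ≤ i → i ≤ n → 2 ≤ j → j ≤ n → br (eN i) (eN j) = 0)
    (hye1 : ∀ j, 1 ≤ j → j ≤ n → br (yN j) (eN 1) = yN (j + 1))
    (hye0 : ∀ j i, 1 ≤ j → j ≤ n → 2 ≤ i → i ≤ n → br (yN j) (eN i) = 0)
    (hey1 : ∀ i, 1 ≤ i → i ≤ n → br (eN i) (yN 1) =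
      if i = 1 then (1 / 2 : ℂ) • yN 2 else if i = 2 then 0 else (1 / 2 : ℂ) • yN i)
    (hey0 : ∀ i j, 1 ≤ i → i ≤ n → 2 ≤ j → j ≤ n → br (eN i) (yN j) = 0)
    (hyy1 : ∀ j, 1 ≤ j → j ≤ n →
      br (yN j) (yN 1) = if j = 1 then eN 1 else eN (j + 1))
    (hyy0 : ∀ j k, 1 ≤ j → j ≤ n → 2 ≤ k → k ≤ n → br (yN j) (yN k) = 0)
    -- the linear maps d₁ and d₂:
    (d1 d2 : Module.End ℂ V)
    (hd1e1 : d1 (eN 1) = (2 : ℂ) • eN 1) (hd1e2 : d1 (eN 2) = 0)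
    (hd1e : ∀ i, 3 ≤ i → i ≤ n → d1 (eN i) = (2 * ((i : ℂ) - 1)) • eN i)
    (hd1y : ∀ i, 1 ≤ i → i ≤ n → d1 (yN i) = (2 * (i : ℂ) - 1) • yN i)
    (hd2e2 : d2 (eN 2) = eN 2)
    (hd2e : ∀ i, 1 ≤ i → i ≤ n → i ≠ 2 → d2 (eN i) = 0)
    (hd2y : ∀ i, 1 ≤ i → i ≤ n → d2 (yN i) = 0) :
    -- d₁ and d₂ are even derivations of H₀:
    (∀ x ∈ Submodule.span ℂ (Set.range fun i : Fin n => bas (Sum.inl i)),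
      d1 x ∈ Submodule.span ℂ (Set.range fun i : Fin n => bas (Sum.inl i)) ∧
      d2 x ∈ Submodule.span ℂ (Set.range fun i : Fin n => bas (Sum.inl i))) ∧
    (∀ x ∈ Submodule.span ℂ (Set.range fun j : Fin n => bas (Sum.inr j)),
      d1 x ∈ Submodule.span ℂ (Set.range fun j : Fin n => bas (Sum.inr j)) ∧
      d2 x ∈ Submodule.span ℂ (Set.range fun j : Fin n => bas (Sum.inr j))) ∧
    (∀ u v : V, d1 (br u v) = br (d1 u) v + br u (d1 v)) ∧
    (∀ u v : V, d2 (br u v) = br (d2 u) v + br u (d2 v)) ∧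
    -- nil-independence:
    (∀ c1 c2 : ℂ, ¬(c1 = 0 ∧ c2 = 0) → ∀ k : ℕ, 1 ≤ k → (c1 • d1 + c2 • d2) ^ k ≠ 0) := by
  have H : IsH₀Bracket n eN yN br := ⟨hee1, hee0, hye1, hye0, hey1, hey0, hyy1, hyy0⟩
  have hbe (i : Fin n) : bas (Sum.inl i) = eN (i + 1) := by
    rw [heN (i + 1) ⟨by omega, by omega⟩]; simp
  have hby (i : Fin n) : bas (Sum.inr i) = yN (i + 1) := by
    rw [hyN (i + 1) ⟨by omega, by omega⟩]; simp
  have he₁ := mem_eigenspace_weightE₁ heN0 hd1e1 hd1e2 hd1e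
  have hy₁ : ∀ k, yN k ∈ d1.eigenspace (weightY₁ k) :=
    mem_eigenspace_of_eq_zero_outside hyN0 hd1y
  have he₂ := mem_eigenspace_weightE₂ heN0 hd2e2 hd2e
  have hy₂ : ∀ k, yN k ∈ d2.eigenspace ((0 : ℕ → ℂ) k) :=
    mem_eigenspace_of_eq_zero_outside hyN0 fun k hk hkn => by simp [hd2y k hk hkn]
  refine ⟨fun x hx => ⟨mem_span_range_of_mem_eigenspace _ _ (fun i => hbe i ▸ he₁ _) hx,
      mem_span_range_of_mem_eigenspace _ _ (fun i => hbe i ▸ he₂ _) hx⟩,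
    fun x hx => ⟨mem_span_range_of_mem_eigenspace _ _ (fun i => hby i ▸ hy₁ _) hx,
      mem_span_range_of_mem_eigenspace _ _ (fun i => hby i ▸ hy₂ _) hx⟩,
    H.leibniz_of_grading isH₀Grading_weight₁ bas hbe hby he₁ hy₁,
    H.leibniz_of_grading isH₀Grading_weight₂ bas hbe hby he₂ hy₂,
    fun c1 c2 hc k _ hk => ?_⟩
  have he₂_ne : eN 2 ≠ 0 := heN 2 ⟨by omega, by omega⟩ ▸ bas.ne_zero _
  have hy₁_ne : yN 1 ≠ 0 := hyN 1 ⟨le_rfl, by omega⟩ ▸ bas.ne_zero _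
  refine not_isNilpotent_smul_add_smul ?_ ?_ ?_ (hy₂ 1) he₂_ne hy₁_ne hc ⟨k, hk⟩
  · simpa [weightE₁] using he₁ 2
  · simpa [weightE₂] using he₂ 2
  · exact (show weightY₁ 1 = 1 by norm_num [weightY₁]) ▸ hy₁ 1
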